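/- arXiv:1009.2944 — 2 statements merged into one kernel-verified Lean document; each statement's English description precedes it below -/
import Mathlib

section
/- Let n ≥ 1 and let q be a prime divisor of g(n). Then there is at most one prime p with p ≤ q/2 that does not divide g(n). -/
/-- Landau's function: the maximal order of a permutation of the symmetric group on `n` letters. -/
noncomputable def landau (n : ℕ) : ℕ :=
  Finset.univ.sup fun σ : Equiv.Perm (Fin n) => orderOf σ

/-- The largest prime factor of `m` (0 if `m` has no prime factor). -/
def maxPrimeFac (m : ℕ) : ℕ := m.primeFactors.sup id

/-!
Let `σ` be a permutation of maximal order `g(n)` and `q` a prime dividing `g(n)`, so `q` divides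
some cycle length `q * d` of `σ`. If `a, b ≥ 2` are coprime to each other and to `g(n)` with
`a + b ≤ q`, replace that cycle by cycles of lengths `a * d` and `b`: this uses no more letters,
and the new order `T ≤ g(n)` satisfies `g(n) * a * b ∣ q * T`, whence `a * b ≤ q`.
For two primes `p₁ < p₂ ≤ q / 2` not dividing `g(n)`, the least power `x` of `p₁` with
`q < x * p₂` still has `x + p₂ ≤ q`, contradicting this.
-/

open Equiv

theorem Nat.Prime.exists_mem_dvd_of_dvd_multiset_lcm {q : ℕ} (hq : q.Prime) {s : Multiset ℕ}
    (h : q ∣ s.lcm) : ∃ c ∈ s, q ∣ c :=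
  hq.prime.exists_mem_multiset_dvd <|
    h.trans <| Multiset.lcm_dvd.2 fun _ hc => Multiset.dvd_prod hc

theorem exists_orderOf_eq_landau (n : ℕ) : ∃ σ : Perm (Fin n), orderOf σ = landau n := by
  obtain ⟨σ, -, hσ⟩ := Finset.exists_mem_eq_sup Finset.univ Finset.univ_nonempty
    fun σ : Perm (Fin n) => orderOf σ
  exact ⟨σ, hσ.symm⟩

theorem multiset_lcm_le_landau {n : ℕ} {t : Multiset ℕ} (ht : ∀ e ∈ t, 2 ≤ e)
    (hsum : t.sum ≤ n) : t.lcm ≤ landau n := by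
  obtain ⟨τ, rfl⟩ := (Perm.exists_with_cycleType_iff (Fin n)).2 ⟨by simpa using hsum, ht⟩
  rw [Perm.lcm_cycleType]
  exact Finset.le_sup (f := fun σ : Perm (Fin n) => orderOf σ) (Finset.mem_univ τ)

theorem exists_pow_mul_gt_and_pow_add_le {p r q : ℕ} (hp : 2 ≤ p) (hpr : p < r)
    (hrq : 2 * r ≤ q) (hq : q.Prime) : ∃ k, q < p ^ k * r ∧ p ^ k + r ≤ q := by
  have hr : 0 < r := by omega
  set e := Nat.log p (q / r)
  refine ⟨e + 1, (Nat.div_lt_iff_lt_mul hr).1 (Nat.lt_pow_succ_log_self (by omega) _), ?_⟩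
  rw [pow_succ]
  rcases Nat.eq_zero_or_pos e with he | he
  · rw [he, pow_zero, one_mul]; omega
  have hy_le : p ^ e * r ≤ q :=
    (Nat.le_div_iff_mul_le hr).1 (Nat.pow_log_le_self p (Nat.div_pos (by omega) hr).ne')
  have hy_lt : p ^ e * r < q := hy_le.lt_of_ne fun h => by
    rcases hq.eq_one_or_self_of_dvd r ⟨p ^ e, by rw [← h, mul_comm]⟩ with h1 | h1 <;> omega
  have hy : p ≤ p ^ e := Nat.le_self_pow he.ne' p
  -- `y * (r - p) ≥ p * (r - p) ≥ r - 1` for `y = p ^ e`, so `y * p + r ≤ y * r + 1 ≤ q`.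
  nlinarith

theorem mul_le_of_coprime_landau {n q a b : ℕ} (hq : q.Prime) (hqL : q ∣ landau n)
    (ha : 2 ≤ a) (hb : 2 ≤ b) (hab : a.Coprime b) (haL : a.Coprime (landau n))
    (hbL : b.Coprime (landau n)) (hsum : a + b ≤ q) : a * b ≤ q := by
  obtain ⟨σ, hσ⟩ := exists_orderOf_eq_landau n
  have hσ_lcm : σ.cycleType.lcm = landau n := by rw [Perm.lcm_cycleType, hσ]
  obtain ⟨c, hc, d, rfl⟩ := hq.exists_mem_dvd_of_dvd_multiset_lcm (hσ_lcm ▸ hqL)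
  have hd : 1 ≤ d := Nat.pos_of_ne_zero fun h => by
    simpa [h] using Perm.two_le_of_mem_cycleType hc
  set rest := σ.cycleType.erase (q * d)
  have hσ_eq : σ.cycleType = q * d ::ₘ rest := (Multiset.cons_erase hc).symm
  have hrest : ∀ e ∈ rest, 2 ≤ e := fun e he =>
    Perm.two_le_of_mem_cycleType (Multiset.mem_of_mem_erase he)
  set t := a * d ::ₘ b ::ₘ rest
  have ht : ∀ e ∈ t, 2 ≤ e := by
    simp only [t, Multiset.forall_mem_cons]
    exact ⟨by nlinarith, hb, hrest⟩
  have hT_le : t.lcm ≤ landau n := by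
    refine multiset_lcm_le_landau ht ?_
    have hn : σ.cycleType.sum ≤ n := by
      simpa [Perm.sum_cycleType] using Finset.card_le_univ σ.support
    rw [hσ_eq, Multiset.sum_cons] at hn
    simp only [t, Multiset.sum_cons]
    nlinarith
  have hT_pos : 0 < t.lcm :=
    Nat.pos_of_ne_zero <| (Multiset.lcm_ne_zero_iff _).2 fun h0 => by simpa using ht 0 h0
  have hL_dvd : landau n ∣ q * t.lcm := by
    rw [← hσ_lcm, hσ_eq, Multiset.lcm_cons]
    refine lcm_dvd ?_ ?_
    · exact mul_dvd_mul_left q <| (dvd_mul_left d a).trans (Multiset.dvd_lcm (by simp [t]))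
    · exact (Multiset.lcm_mono fun e he => by simp [t, he]).trans (dvd_mul_left _ _)
  have hab_dvd : a * b ∣ t.lcm :=
    hab.mul_dvd_of_dvd_of_dvd ((dvd_mul_right a d).trans (Multiset.dvd_lcm (by simp [t])))
      (Multiset.dvd_lcm (by simp [t]))
  have hLab : landau n * (a * b) ∣ q * t.lcm :=
    (haL.mul_left hbL).symm.mul_dvd_of_dvd_of_dvd hL_dvd (hab_dvd.trans (dvd_mul_left _ _))
  have hL_pos : 0 < landau n := hσ ▸ orderOf_pos σ
  have := (Nat.le_of_dvd (Nat.mul_pos hq.pos hT_pos) hLab).trans (Nat.mul_le_mul_left q hT_le)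
  nlinarith

theorem dvd_landau_of_lt_of_not_dvd {n q p₁ p₂ : ℕ} (hq : q.Prime) (hqL : q ∣ landau n)
    (hp₁ : p₁.Prime) (hp₂ : p₂.Prime) (h12 : p₁ < p₂) (hp₂q : 2 * p₂ ≤ q)
    (hp₁L : ¬p₁ ∣ landau n) : p₂ ∣ landau n := by
  by_contra hp₂L
  obtain ⟨k, hqk, hk⟩ := exists_pow_mul_gt_and_pow_add_le hp₁.two_le h12 hp₂q hq
  have hk0 : k ≠ 0 := by rintro rfl; rw [pow_zero, one_mul] at hqk; omega
  have := mul_le_of_coprime_landau hq hqL (Nat.one_lt_pow hk0 hp₁.one_lt) hp₂.two_le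
    (((Nat.coprime_primes hp₁ hp₂).2 h12.ne).pow_left k)
    ((hp₁.coprime_iff_not_dvd.2 hp₁L).pow_left k) (hp₂.coprime_iff_not_dvd.2 hp₂L) hk
  omega

theorem stmt7_general (n q : ℕ) (hq : q.Prime) (hqd : q ∣ landau n) :
    ∀ p₁ p₂ : ℕ, p₁.Prime → p₂.Prime → (p₁ : ℝ) ≤ (q : ℝ) / 2 → (p₂ : ℝ) ≤ (q : ℝ) / 2 →
      ¬ p₁ ∣ landau n → ¬ p₂ ∣ landau n → p₁ = p₂ := by
  intro p₁ p₂ hp₁ hp₂ hp₁q hp₂q hp₁L hp₂L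
  have h₁ : 2 * p₁ ≤ q := by exact_mod_cast (by linarith : (2 * p₁ : ℝ) ≤ q)
  have h₂ : 2 * p₂ ≤ q := by exact_mod_cast (by linarith : (2 * p₂ : ℝ) ≤ q)
  rcases lt_trichotomy p₁ p₂ with h | h | h
  · exact absurd (dvd_landau_of_lt_of_not_dvd hq hqd hp₁ hp₂ h h₂ hp₁L) hp₂L
  · exact h
  · exact absurd (dvd_landau_of_lt_of_not_dvd hq hqd hp₂ hp₁ h h₁ hp₂L) hp₁L

/-- If q is a prime divisor of g(n), there is at most one prime p ≤ q/2 not dividing g(n). -/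
theorem stmt7 (n q : ℕ) (hn : 1 ≤ n) (hq : q.Prime) (hqd : q ∣ landau n) :
    ∀ p₁ p₂ : ℕ, p₁.Prime → p₂.Prime → (p₁ : ℝ) ≤ (q : ℝ) / 2 → (p₂ : ℝ) ≤ (q : ℝ) / 2 →
      ¬ p₁ ∣ landau n → ¬ p₂ ∣ landau n → p₁ = p₂ :=
  stmt7_general n q hq hqd
end

section
/- For every integer n ≥ 2, one has log g(n) ≤ θ(P⁺(g(n))) + S(q), where q is the smallest prime strictly greater than P⁺(g(n)) and S(q) = Σ_{α=2}^{⌊log(2q)/log 2⌋} θ(q^{1/α} + 1). -/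
/-- Chebyshev's function θ(x) = Σ_{p ≤ x, p prime} log p. -/
noncomputable def chebTheta (x : ℝ) : ℝ :=
  ∑ p ∈ Finset.filter Nat.Prime (Finset.range (⌊x⌋₊ + 1)), Real.log p

/-- S(q) = Σ_{α=2}^{⌊log(2q)/log 2⌋} θ(q^{1/α} + 1). -/
noncomputable def Sfun (q : ℕ) : ℝ :=
  ∑ a ∈ Finset.Icc 2 ⌊Real.log (2 * q) / Real.log 2⌋₊,
    chebTheta ((q : ℝ) ^ ((1 : ℝ) / a) + 1)

/-!
Write `log g(n) = ∑ₚ vₚ log p` and count each multiplicity as `vₚ = 1 + #{β | 2 ≤ β ≤ vₚ}`.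
The terms with `β = 1` add up to at most `θ(P⁺(g(n)))`. If `β ≥ 2` and `p ^ β ∣ g(n)`, then
`p ^ (β - 1) * (p - 1) < q`: otherwise a cycle of length `d` divisible by `p ^ β` in a permutation
of maximal order could be replaced by cycles of lengths `d / p` and `q`, using at most `d` points,
and since the prime `q > P⁺(g(n)) ≥ p` does not divide `g(n)`, the order would grow by the
factor `q / p`. Hence `p ≤ q ^ (1 / β) + 1` and `2 ^ β < 2 * q`, so the terms with `β ≥ 2`
add up to at most `S(q)`.
-/

theorem Multiset.exists_mem_pow_dvd_of_pow_dvd_lcm {c : Multiset ℕ} (hc : 0 ∉ c) {p k : ℕ}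
    (hp : p.Prime) (hk : k ≠ 0) (h : p ^ k ∣ c.lcm) : ∃ d ∈ c, p ^ k ∣ d := by
  have hlcm : c.lcm = c.toFinset.lcm id := by
    rw [Finset.lcm_def, Multiset.toFinset_val, Multiset.map_id, Multiset.lcm_dedup]
  have hne : ∀ d ∈ c.toFinset, id d ≠ 0 := fun d hd h0 => hc (h0 ▸ Multiset.mem_toFinset.1 hd)
  rw [hp.pow_dvd_iff_le_factorization (by rwa [Ne, Multiset.lcm_eq_zero_iff]), hlcm,
    Finset.factorization_lcm hne, Finset.le_sup_iff (Nat.pos_of_ne_zero hk)] at h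
  obtain ⟨d, hd, hkd⟩ := h
  exact ⟨d, Multiset.mem_toFinset.1 hd, (hp.pow_dvd_iff_le_factorization (hne d hd)).2 hkd⟩

theorem Multiset.lcm_mul_dvd_mul_lcm_cons_cons_erase {c : Multiset ℕ} {p e q : ℕ}
    (hd : p * e ∈ c) (hq : q.Prime) (hqc : ¬ q ∣ c.lcm) :
    c.lcm * q ∣ p * (q ::ₘ e ::ₘ c.erase (p * e)).lcm := by
  set L := (e ::ₘ c.erase (p * e)).lcm
  have hLc : L ∣ c.lcm := by
    refine Multiset.lcm_dvd.2 fun b hb => ?_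
    rcases Multiset.mem_cons.1 hb with rfl | hb
    · exact (Dvd.intro_left p rfl).trans (Multiset.dvd_lcm hd)
    · exact Multiset.dvd_lcm (Multiset.mem_of_mem_erase hb)
  have hcL : c.lcm ∣ p * L := by
    refine Multiset.lcm_dvd.2 fun b hb => ?_
    rw [← Multiset.cons_erase hd, Multiset.mem_cons] at hb
    rcases hb with rfl | hb
    · exact mul_dvd_mul_left p (Multiset.dvd_lcm (Multiset.mem_cons_self _ _))
    · exact (Multiset.dvd_lcm (Multiset.mem_cons_of_mem hb)).trans (dvd_mul_left L p)
  have hqL : Nat.Coprime q L := (hq.coprime_iff_not_dvd).2 fun h => hqc (h.trans hLc)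
  rw [Multiset.lcm_cons, lcm_eq_nat_lcm, hqL.lcm_eq_mul, ← mul_assoc, mul_right_comm]
  exact mul_dvd_mul_right hcL q

theorem orderOf_le_landau {n : ℕ} (σ : Equiv.Perm (Fin n)) : orderOf σ ≤ landau n :=
  Finset.le_sup (f := fun σ : Equiv.Perm (Fin n) => orderOf σ) (Finset.mem_univ σ)

theorem landau_pos (n : ℕ) : 0 < landau n :=
  (orderOf_pos 1).trans_le (orderOf_le_landau 1)

theorem lcm_le_landau {n : ℕ} {c : Multiset ℕ} (hc : ∀ x ∈ c, 2 ≤ x) (hsum : c.sum ≤ n) :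
    c.lcm ≤ landau n := by
  obtain ⟨σ, hσ⟩ := (Equiv.Perm.exists_with_cycleType_iff (α := Fin n)).2
    ⟨by simpa using hsum, hc⟩
  simpa only [← hσ, Equiv.Perm.lcm_cycleType] using orderOf_le_landau σ

theorem exists_multiset_lcm_eq_landau (n : ℕ) :
    ∃ c : Multiset ℕ, (∀ x ∈ c, 2 ≤ x) ∧ c.sum ≤ n ∧ c.lcm = landau n := by
  obtain ⟨σ, -, hσ⟩ := Finset.exists_mem_eq_sup Finset.univ Finset.univ_nonempty
    fun σ : Equiv.Perm (Fin n) => orderOf σ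
  refine ⟨σ.cycleType, fun x hx => σ.two_le_of_mem_cycleType hx, ?_, ?_⟩
  · simpa using σ.sum_cycleType_le
  · rw [Equiv.Perm.lcm_cycleType, landau, hσ]

theorem pow_pred_mul_pred_lt_of_pow_dvd_landau {n p a q : ℕ} (hp : p.Prime) (ha : 2 ≤ a)
    (hpa : p ^ a ∣ landau n) (hq : q.Prime) (hqn : ¬ q ∣ landau n) (hpq : p < q) :
    p ^ (a - 1) * (p - 1) < q := by
  by_contra! hqp
  obtain ⟨c, hc2, hsum, hlcm⟩ := exists_multiset_lcm_eq_landau n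
  obtain ⟨d, hd, hpad⟩ := Multiset.exists_mem_pow_dvd_of_pow_dvd_lcm
    (fun h0 => by simpa using hc2 0 h0) hp (by omega) (hlcm ▸ hpa)
  obtain ⟨e, rfl⟩ : p ∣ d := (dvd_pow_self p (by omega)).trans hpad
  have hpe : p ^ (a - 1) ∣ e := by
    rw [← Nat.mul_dvd_mul_iff_left hp.pos, ← pow_succ', Nat.sub_add_cancel (by omega)]
    exact hpad
  have he : p ^ (a - 1) ≤ e := Nat.le_of_dvd (Nat.pos_of_ne_zero fun h0 => by
    simpa [h0] using hc2 _ hd) hpe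
  have hpe2 : 2 ≤ e := le_trans (hp.two_le.trans (Nat.le_self_pow (by omega) p)) he
  have hqe : q + e ≤ p * e := by
    have := Nat.mul_le_mul_right (p - 1) he
    have : e * (p - 1) + e = p * e := by
      rw [mul_comm p, ← Nat.mul_succ, Nat.succ_eq_add_one, Nat.sub_add_cancel hp.one_le]
    omega
  set c' := q ::ₘ e ::ₘ c.erase (p * e)
  have hc'2 : ∀ x ∈ c', 2 ≤ x := by
    intro x hx
    rcases Multiset.mem_cons.1 hx with rfl | hx
    · exact hq.two_le
    rcases Multiset.mem_cons.1 hx with rfl | hx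
    · exact hpe2
    · exact hc2 x (Multiset.mem_of_mem_erase hx)
  have hsum' : c'.sum ≤ n := by
    have := Multiset.sum_erase hd
    simp only [c', Multiset.sum_cons]
    omega
  have hdvd := Multiset.lcm_mul_dvd_mul_lcm_cons_cons_erase hd hq (hlcm ▸ hqn)
  have hc'0 : 0 < c'.lcm := Nat.pos_of_ne_zero <| (Multiset.lcm_eq_zero_iff _).not.2
    fun h0 => by simpa using hc'2 0 h0
  have hle : landau n * q ≤ landau n * p := by
    rw [← hlcm, mul_comm c.lcm p]
    exact (Nat.le_of_dvd (Nat.mul_pos hp.pos hc'0) hdvd).trans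
      (Nat.mul_le_mul_left p (hlcm ▸ lcm_le_landau hc'2 hsum'))
  exact hpq.not_ge (Nat.le_of_mul_le_mul_left hle (landau_pos n))

theorem le_maxPrimeFac {p m : ℕ} (hp : p ∈ m.primeFactors) : p ≤ maxPrimeFac m :=
  Finset.le_sup (f := id) hp

theorem sum_log_le_chebTheta {s : Finset ℕ} {x : ℝ} (hs : ∀ p ∈ s, p.Prime ∧ (p : ℝ) ≤ x) :
    ∑ p ∈ s, Real.log p ≤ chebTheta x := by
  refine Finset.sum_le_sum_of_subset_of_nonneg (fun p hp => ?_) fun p hp _ => ?_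
  · obtain ⟨hpp, hpx⟩ := hs p hp
    exact Finset.mem_filter.2 ⟨Finset.mem_range.2 (Nat.lt_succ_of_le (Nat.le_floor hpx)), hpp⟩
  · exact Real.log_nonneg (by exact_mod_cast (Finset.mem_filter.1 hp).2.one_lt.le)

theorem Real.log_eq_sum_primeFactors_add_sum_Icc {m N : ℕ} (hm : m ≠ 0)
    (hN : ∀ p, m.factorization p ≤ N) :
    Real.log m = ∑ p ∈ m.primeFactors, Real.log p +
      ∑ β ∈ Finset.Icc 2 N, ∑ p ∈ m.primeFactors with β ≤ m.factorization p, Real.log p := by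
  have hmult : ∀ p ∈ m.primeFactors, (m.factorization p : ℝ) * Real.log p =
      Real.log p + ∑ β ∈ Finset.Icc 2 N with β ≤ m.factorization p, Real.log p := by
    intro p hp
    have hpos : 1 ≤ m.factorization p := (Nat.prime_of_mem_primeFactors hp).factorization_pos_of_dvd
      hm (Nat.dvd_of_mem_primeFactors hp)
    have hfilter : {β ∈ Finset.Icc 2 N | β ≤ m.factorization p} =
        Finset.Icc 2 (m.factorization p) := by
      ext β
      simp only [Finset.mem_filter, Finset.mem_Icc]
      have := hN p
      omega
    rw [hfilter, Finset.sum_const, Nat.card_Icc, nsmul_eq_mul]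
    push_cast [show m.factorization p + 1 - 2 = m.factorization p - 1 by omega, Nat.cast_sub hpos]
    ring
  rw [Real.log_nat_eq_sum_factorization, Finsupp.sum, Nat.support_factorization,
    Finset.sum_congr rfl hmult, Finset.sum_add_distrib]
  simp only [Finset.sum_filter]
  rw [Finset.sum_comm]

theorem two_pow_le_two_mul_pow_pred_mul_pred {p β : ℕ} (hp : 2 ≤ p) (hβ : 1 ≤ β) :
    2 ^ β ≤ 2 * (p ^ (β - 1) * (p - 1)) := by
  calc 2 ^ β = 2 * (2 ^ (β - 1) * 1) := by rw [mul_one, ← pow_succ', Nat.sub_add_cancel hβ]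
    _ ≤ 2 * (p ^ (β - 1) * (p - 1)) := by gcongr; omega

theorem le_floor_log_two_mul_div_log_two {β q : ℕ} (h : 2 ^ β ≤ 2 * q) :
    β ≤ ⌊Real.log (2 * q) / Real.log 2⌋₊ := by
  have hq : (0 : ℝ) < 2 * q := by
    have : 0 < 2 * q := lt_of_lt_of_le (by positivity) h
    exact_mod_cast this
  refine Nat.le_floor ?_
  rw [le_div_iff₀ (Real.log_pos one_lt_two), ← Real.log_pow]
  exact Real.log_le_log (by positivity) (by exact_mod_cast h)

theorem le_rpow_one_div_add_one {p β q : ℕ} (hp : 1 ≤ p) (hβ : β ≠ 0)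
    (h : p ^ (β - 1) * (p - 1) ≤ q) : (p : ℝ) ≤ (q : ℝ) ^ ((1 : ℝ) / β) + 1 := by
  have hpow : (p - 1) ^ β ≤ q :=
    calc (p - 1) ^ β = (p - 1) ^ (β - 1) * (p - 1) := by
          rw [← pow_succ, Nat.sub_add_cancel (by omega)]
      _ ≤ p ^ (β - 1) * (p - 1) := by gcongr; omega
      _ ≤ q := h
  have hpow' : ((p : ℝ) - 1) ^ β ≤ q := by
    rw [← Nat.cast_one, ← Nat.cast_sub hp]; exact_mod_cast hpow
  have h0 : (0 : ℝ) ≤ p - 1 := by simpa using (Nat.one_le_cast (α := ℝ)).2 hp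
  have := Real.rpow_le_rpow (by positivity) hpow' (by positivity : (0 : ℝ) ≤ (β : ℝ)⁻¹)
  rw [Real.pow_rpow_inv_natCast h0 hβ] at this
  rw [one_div]
  linarith

theorem stmt17_general (n : ℕ) (q : ℕ) (hq : q.Prime)
    (hq1 : maxPrimeFac (landau n) < q) :
    Real.log (landau n) ≤ chebTheta (maxPrimeFac (landau n) : ℝ) + Sfun q := by
  set m := landau n
  have hqm : ¬ q ∣ m := fun h =>
    (le_maxPrimeFac (Nat.mem_primeFactors.2 ⟨hq, h, (landau_pos n).ne'⟩)).not_gt hq1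
  have hbound : ∀ p ∈ m.primeFactors, ∀ β, 2 ≤ β → β ≤ m.factorization p →
      p ^ (β - 1) * (p - 1) < q := fun p hp β hβ hβp =>
    pow_pred_mul_pred_lt_of_pow_dvd_landau (Nat.prime_of_mem_primeFactors hp) hβ
      ((pow_dvd_pow p hβp).trans (Nat.ordProj_dvd m p)) hq hqm ((le_maxPrimeFac hp).trans_lt hq1)
  have hN : ∀ p, m.factorization p ≤ ⌊Real.log (2 * q) / Real.log 2⌋₊ := by
    intro p
    refine le_floor_log_two_mul_div_log_two ?_
    rcases lt_or_ge (m.factorization p) 2 with h | h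
    · calc 2 ^ m.factorization p ≤ 2 ^ 1 := Nat.pow_le_pow_right two_pos (by omega)
        _ ≤ 2 * q := by linarith [hq.two_le]
    · have hp : p ∈ m.primeFactors := by
        rw [← Nat.support_factorization]; exact Finsupp.mem_support_iff.2 (by omega)
      exact (two_pow_le_two_mul_pow_pred_mul_pred (Nat.prime_of_mem_primeFactors hp).two_le
        (by omega)).trans (by linarith [hbound p hp _ h le_rfl])
  rw [Real.log_eq_sum_primeFactors_add_sum_Icc (landau_pos n).ne' hN, Sfun]
  refine add_le_add (sum_log_le_chebTheta fun p hp => ⟨Nat.prime_of_mem_primeFactors hp,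
    by exact_mod_cast le_maxPrimeFac hp⟩) (Finset.sum_le_sum fun β hβ => ?_)
  refine sum_log_le_chebTheta fun p hp => ?_
  obtain ⟨hp, hβp⟩ := Finset.mem_filter.1 hp
  have hβ := (Finset.mem_Icc.1 hβ).1
  exact ⟨Nat.prime_of_mem_primeFactors hp, le_rpow_one_div_add_one
    (Nat.prime_of_mem_primeFactors hp).one_le (by omega) (hbound p hp β hβ hβp).le⟩

/-- For n ≥ 2, log g(n) ≤ θ(P⁺(g(n))) + S(q) where q is the prime following P⁺(g(n)). -/
theorem stmt17 (n : ℕ) (hn : 2 ≤ n) (q : ℕ) (hq : q.Prime)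
    (hq1 : maxPrimeFac (landau n) < q)
    (hq2 : ∀ r : ℕ, r.Prime → maxPrimeFac (landau n) < r → q ≤ r) :
    Real.log (landau n) ≤ chebTheta (maxPrimeFac (landau n) : ℝ) + Sfun q :=
  stmt17_general n q hq hq1
end
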